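/- arXiv:2104.09667 — 3 statements merged into one kernel-verified Lean document; each statement's English description precedes it below -/
import Mathlib

section
/- For the SGD iteration θ_{k+1} = θ_k − η ∇L̂_k(θ_k) over N steps with smooth losses, the iterate satisfies θ_{N+1} = θ_1 − η Σ_{j=1}^N ∇L̂_j(θ_1) + η² Σ_{j=1}^N Σ_{k<j} ∇∇L̂_j(θ_1) ∇L̂_k(θ_1) + O(N³η³), so the second-order correction term depends on the order of the batches. -/
/-!
Write `g j = ∇L̂_j` and `D j = ∇∇L̂_j(θ₁)`. Unrolling the recursion gives
`θ_j - θ₁ = -η ∑_{k<j} g k (θ_k)`, so every iterate stays within `N η B` of `θ₁`. Expanding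
`g j (θ_j)` to first order around `θ₁` and replacing `g k (θ_k)` by `g k (θ₁)` inside the linear
term each cost `O(B³ N² η²)` per step, since `g j` has a `B`-Lipschitz derivative and `g k` is
`B`-Lipschitz. Summing the `N` steps, each multiplied by `η`, gives the `O(B³ N³ η³)` error.
-/

open Finset

section MeanValue

variable {E F : Type*} [NormedAddCommGroup E] [NormedSpace ℝ E]
  [NormedAddCommGroup F] [NormedSpace ℝ F] {g : E → F} {B : ℝ}

theorem norm_sub_le_of_norm_fderiv_le (hg : Differentiable ℝ g)
    (hB : ∀ x, ‖fderiv ℝ g x‖ ≤ B) (x y : E) : ‖g x - g y‖ ≤ B * ‖x - y‖ :=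
  convex_univ.norm_image_sub_le_of_norm_fderiv_le (fun z _ => hg z) (fun z _ => hB z)
    trivial trivial

theorem norm_sub_sub_fderiv_apply_le (hg : Differentiable ℝ g) (hB : 0 ≤ B) {x : E}
    (hlip : ∀ z, ‖fderiv ℝ g z - fderiv ℝ g x‖ ≤ B * ‖z - x‖) (y : E) :
    ‖g y - g x - fderiv ℝ g x (y - x)‖ ≤ B * ‖y - x‖ ^ 2 := by
  have hseg : ∀ z ∈ segment ℝ x y, ‖fderiv ℝ g z - fderiv ℝ g x‖ ≤ B * ‖y - x‖ :=
    fun z hz => (hlip z).trans (by gcongr; exact norm_sub_le_of_mem_segment hz)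
  calc ‖g y - g x - fderiv ℝ g x (y - x)‖ ≤ B * ‖y - x‖ * ‖y - x‖ :=
        (convex_segment x y).norm_image_sub_le_of_norm_fderiv_le' (fun z _ => hg z) hseg
          (left_mem_segment ℝ x y) (right_mem_segment ℝ x y)
    _ = B * ‖y - x‖ ^ 2 := by ring

variable (hg : ContDiff ℝ 2 g) (hgB : ∀ x, ∀ i ≤ 2, ‖iteratedFDeriv ℝ i g x‖ ≤ B)
include hg hgB

theorem ContDiff.norm_sub_le_of_norm_iteratedFDeriv_le (x y : E) :
    ‖g x - g y‖ ≤ B * ‖x - y‖ :=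
  norm_sub_le_of_norm_fderiv_le (hg.differentiable two_ne_zero)
    (fun z => norm_iteratedFDeriv_one (𝕜 := ℝ) g (x := z) ▸ hgB z 1 one_le_two) x y

theorem ContDiff.norm_sub_sub_fderiv_apply_le_of_norm_iteratedFDeriv_le (x y : E) :
    ‖g y - g x - fderiv ℝ g x (y - x)‖ ≤ B * ‖y - x‖ ^ 2 := by
  have hB : 0 ≤ B := (norm_nonneg _).trans (hgB x 0 zero_le_two)
  have hDg : ContDiff ℝ 1 (fderiv ℝ g) := hg.fderiv_right (by norm_num)
  have hD2g (z : E) : ‖fderiv ℝ (fderiv ℝ g) z‖ ≤ B := by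
    rw [← norm_iteratedFDeriv_one, norm_iteratedFDeriv_fderiv]
    exact hgB z 2 le_rfl
  exact norm_sub_sub_fderiv_apply_le (hg.differentiable two_ne_zero) hB
    (norm_sub_le_of_norm_fderiv_le (hDg.differentiable one_ne_zero) hD2g · x) y

end MeanValue

section Gradient

open InnerProductSpace

variable {E : Type*} [NormedAddCommGroup E] [InnerProductSpace ℝ E] [CompleteSpace E]

theorem norm_iteratedFDeriv_gradient (f : E → ℝ) (x : E) (i : ℕ) :
    ‖iteratedFDeriv ℝ i (gradient f) x‖ = ‖iteratedFDeriv ℝ (i + 1) f x‖ := by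
  rw [← norm_iteratedFDeriv_fderiv]
  exact (toDual ℝ E).symm.norm_iteratedFDeriv_comp_left (fderiv ℝ f) x i

theorem ContDiff.gradient {f : E → ℝ} {n : WithTop ℕ∞} (hf : ContDiff ℝ (n + 1) f) :
    ContDiff ℝ n (gradient f) :=
  (toDual ℝ E).symm.contDiff.comp (hf.fderiv_right le_rfl)

end Gradient

theorem norm_smul_sum_Ico_le {E : Type*} [NormedAddCommGroup E] [NormedSpace ℝ E]
    {f : ℕ → E} {η K : ℝ} {j N : ℕ} (hη : 0 ≤ η) (hK : 0 ≤ K) (hj : j ≤ N + 1)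
    (hf : ∀ k ∈ Ico 1 j, ‖f k‖ ≤ K) : ‖η • ∑ k ∈ Ico 1 j, f k‖ ≤ η * (N * K) := by
  have hcard : ((Ico 1 j).card : ℝ) ≤ N := by
    rw [Nat.card_Ico]; exact_mod_cast (by omega : j - 1 ≤ N)
  rw [norm_smul, Real.norm_of_nonneg hη]
  gcongr
  calc ‖∑ k ∈ Ico 1 j, f k‖ ≤ (Ico 1 j).card * K := by
        simpa using norm_sum_le_of_le _ hf
    _ ≤ N * K := by gcongr

section SGD

variable {E : Type*} [NormedAddCommGroup E] [NormedSpace ℝ E]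
  {g : ℕ → E → E} {D : ℕ → E →L[ℝ] E} {θ : ℕ → E} {η B : ℝ} {N : ℕ}

theorem sgd_iterate_eq (hrec : ∀ k, 1 ≤ k → k ≤ N → θ (k + 1) = θ k - η • g k (θ k))
    {j : ℕ} (hj₁ : 1 ≤ j) (hj : j ≤ N + 1) :
    θ j = θ 1 - η • ∑ k ∈ Ico 1 j, g k (θ k) := by
  induction j, hj₁ using Nat.le_induction with
  | base => simp
  | succ j hj₁ ih =>
    rw [hrec j hj₁ (by omega), sum_Ico_succ_top hj₁, smul_add]
    nth_rw 1 [ih (by omega)]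
    abel

variable (hη : 0 ≤ η) (hg : ∀ j x, ‖g j x‖ ≤ B)
  (hrec : ∀ k, 1 ≤ k → k ≤ N → θ (k + 1) = θ k - η • g k (θ k))
include hη hg hrec

theorem norm_sgd_iterate_sub_le {j : ℕ} (hj₁ : 1 ≤ j) (hj : j ≤ N + 1) :
    ‖θ j - θ 1‖ ≤ η * (N * B) := by
  rw [sgd_iterate_eq hrec hj₁ hj, sub_sub_cancel_left, norm_neg]
  exact norm_smul_sum_Ico_le hη ((norm_nonneg _).trans (hg 0 0)) hj fun k _ => hg k (θ k)

theorem norm_sgd_step_remainder_le (hlip : ∀ j x y, ‖g j x - g j y‖ ≤ B * ‖x - y‖)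
    (hD : ∀ j, ‖D j‖ ≤ B)
    (htaylor : ∀ j y, ‖g j y - g j (θ 1) - D j (y - θ 1)‖ ≤ B * ‖y - θ 1‖ ^ 2)
    {j : ℕ} (hj₁ : 1 ≤ j) (hj : j ≤ N) :
    ‖g j (θ j) - g j (θ 1) + η • ∑ k ∈ Ico 1 j, D j (g k (θ 1))‖
      ≤ 2 * B ^ 3 * N ^ 2 * η ^ 2 := by
  have hB : 0 ≤ B := (norm_nonneg _).trans (hg 0 0)
  have hdrift {k : ℕ} (hk₁ : 1 ≤ k) (hk : k ≤ N + 1) : ‖θ k - θ 1‖ ≤ η * (N * B) :=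
    norm_sgd_iterate_sub_le hη hg hrec hk₁ hk
  have hsplit : g j (θ j) - g j (θ 1) + η • ∑ k ∈ Ico 1 j, D j (g k (θ 1))
      = (g j (θ j) - g j (θ 1) - D j (θ j - θ 1))
        + η • ∑ k ∈ Ico 1 j, D j (g k (θ 1) - g k (θ k)) := by
    rw [sgd_iterate_eq hrec hj₁ (by omega), sub_sub_cancel_left]
    simp only [map_neg, map_smul, map_sum, map_sub, sum_sub_distrib, smul_sub]
    abel
  have hfirst : ‖g j (θ j) - g j (θ 1) - D j (θ j - θ 1)‖ ≤ B ^ 3 * N ^ 2 * η ^ 2 :=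
    calc _ ≤ B * ‖θ j - θ 1‖ ^ 2 := htaylor j (θ j)
      _ ≤ B * (η * (N * B)) ^ 2 := by gcongr; exact hdrift hj₁ (by omega)
      _ = B ^ 3 * N ^ 2 * η ^ 2 := by ring
  have hsecond : ‖η • ∑ k ∈ Ico 1 j, D j (g k (θ 1) - g k (θ k))‖ ≤ B ^ 3 * N ^ 2 * η ^ 2 :=
    calc _ ≤ η * (N * (B * (B * (η * (N * B))))) := by
          refine norm_smul_sum_Ico_le hη (by positivity) (by omega) fun k hk => ?_
          obtain ⟨hk₁, hk⟩ := mem_Ico.mp hk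
          calc ‖D j (g k (θ 1) - g k (θ k))‖ ≤ ‖D j‖ * ‖g k (θ 1) - g k (θ k)‖ :=
                (D j).le_opNorm _
            _ ≤ B * (B * ‖θ 1 - θ k‖) := by gcongr; exacts [hD j, hlip k _ _]
            _ ≤ B * (B * (η * (N * B))) := by
                rw [norm_sub_rev]; gcongr; exact hdrift hk₁ (by omega)
      _ = B ^ 3 * N ^ 2 * η ^ 2 := by ring
  rw [hsplit]
  linarith [norm_add_le (g j (θ j) - g j (θ 1) - D j (θ j - θ 1))
    (η • ∑ k ∈ Ico 1 j, D j (g k (θ 1) - g k (θ k)))]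

theorem norm_sgd_sub_second_order_le (hlip : ∀ j x y, ‖g j x - g j y‖ ≤ B * ‖x - y‖)
    (hD : ∀ j, ‖D j‖ ≤ B)
    (htaylor : ∀ j y, ‖g j y - g j (θ 1) - D j (y - θ 1)‖ ≤ B * ‖y - θ 1‖ ^ 2) :
    ‖θ (N + 1) - (θ 1 - η • ∑ j ∈ Icc 1 N, g j (θ 1)
        + η ^ 2 • ∑ j ∈ Icc 1 N, ∑ k ∈ Ico 1 j, D j (g k (θ 1)))‖
      ≤ 2 * B ^ 3 * N ^ 3 * η ^ 3 := by
  have hB : 0 ≤ B := (norm_nonneg _).trans (hg 0 0)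
  have hexp : θ (N + 1) - (θ 1 - η • ∑ j ∈ Icc 1 N, g j (θ 1)
        + η ^ 2 • ∑ j ∈ Icc 1 N, ∑ k ∈ Ico 1 j, D j (g k (θ 1)))
      = -(η • ∑ j ∈ Ico 1 (N + 1),
          (g j (θ j) - g j (θ 1) + η • ∑ k ∈ Ico 1 j, D j (g k (θ 1)))) := by
    rw [sgd_iterate_eq hrec le_add_self le_rfl, ← Ico_add_one_right_eq_Icc]
    simp only [sum_add_distrib, sum_sub_distrib, ← smul_sum, smul_add, smul_sub, smul_smul, sq]
    abel
  rw [hexp, norm_neg]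
  calc _ ≤ η * (N * (2 * B ^ 3 * N ^ 2 * η ^ 2)) :=
        norm_smul_sum_Ico_le hη (by positivity) le_rfl fun j hj =>
          norm_sgd_step_remainder_le hη hg hrec hlip hD htaylor (mem_Ico.mp hj).1
            (Nat.lt_succ_iff.mp (mem_Ico.mp hj).2)
    _ = 2 * B ^ 3 * N ^ 3 * η ^ 3 := by ring

end SGD

/-- second-order (order-dependent) expansion of N steps of SGD. -/
theorem stmt1 {E : Type*} [NormedAddCommGroup E] [InnerProductSpace ℝ E]
    [CompleteSpace E]
    (N : ℕ) (L : ℕ → E → ℝ)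
    (hsmooth : ∀ j, ContDiff ℝ 3 (L j))
    (B : ℝ)
    (hbound : ∀ j x, ∀ i ≤ 3, ‖iteratedFDeriv ℝ i (L j) x‖ ≤ B)
    (θ1 : E) :
    ∃ C : ℝ, ∀ η : ℝ, 0 < η → η ≤ 1 →
      ∀ θ : ℕ → E, θ 1 = θ1 →
        (∀ k, 1 ≤ k → k ≤ N → θ (k + 1) = θ k - η • gradient (L k) (θ k)) →
        ‖θ (N + 1) -
            (θ1 - η • ∑ j ∈ Finset.Icc 1 N, gradient (L j) θ1
              + (η ^ 2) • ∑ j ∈ Finset.Icc 1 N, ∑ k ∈ Finset.Ico 1 j,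
                  (fderiv ℝ (gradient (L j)) θ1) (gradient (L k) θ1))‖
          ≤ C * (N : ℝ) ^ 3 * η ^ 3 := by
  refine ⟨2 * B ^ 3, fun η hη _ θ hθ1 hrec => ?_⟩
  subst hθ1
  have hsmooth₂ (j : ℕ) : ContDiff ℝ 2 (gradient (L j)) := (hsmooth j).gradient
  have hbound₂ (j : ℕ) (x : E) (i : ℕ) (hi : i ≤ 2) :
      ‖iteratedFDeriv ℝ i (gradient (L j)) x‖ ≤ B :=
    norm_iteratedFDeriv_gradient (L j) x i ▸ hbound j x (i + 1) (by omega)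
  have hgrad (j : ℕ) (x : E) : ‖gradient (L j) x‖ ≤ B := by
    simpa using hbound₂ j x 0 (by omega)
  have hhess (j : ℕ) : ‖fderiv ℝ (gradient (L j)) (θ 1)‖ ≤ B := by
    simpa using hbound₂ j (θ 1) 1 (by omega)
  exact norm_sgd_sub_second_order_le hη.le hgrad hrec
    (fun j => (hsmooth₂ j).norm_sub_le_of_norm_iteratedFDeriv_le (hbound₂ j)) hhess
    (fun j => (hsmooth₂ j).norm_sub_sub_fderiv_apply_le_of_norm_iteratedFDeriv_le (hbound₂ j) _)
end

section
/- For SGD with a possibly biased batch-sampling distribution and M-Lipschitz gradient, min_{k=1,...,t} E‖∇L̂(θ_k)‖² ≤ (L̂(θ_1) − L̂*)/(Σ η_k) + (M/2)·(Σ η_k² E‖∇L̂_{i_k}(θ_k)‖²)/(Σ η_k) − E[ (Σ_{k=1}^t η_k ∇L̂(θ_k)ᵀ( E[∇L̂_{i_k}(θ_k) | θ_k] − ∇L̂(θ_k) ))/(Σ_{k=1}^t η_k) ]. -/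
/-!
The descent lemma for the `M`-smooth objective `L̂` bounds `η_k ⟪∇L̂(θ_k), ∇L̂_{i_k}(θ_k)⟫` by
`L̂(θ_k) - L̂(θ_{k+1}) + (M/2) η_k² ‖∇L̂_{i_k}(θ_k)‖²`. In expectation, the sampled gradient may be
replaced by its conditional expectation given `θ_k`, which splits the left side into
`η_k ‖∇L̂(θ_k)‖²` plus the bias term. Summing over `k` telescopes the losses down to
`L̂(θ_1) - L̂*`, and the minimum is at most the `η`-weighted mean.

Since `θ_1` is deterministic and the sampled index ranges over a finite set, each iterate takes
only finitely many values; this is what makes every expectation finite and the conditional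
expectation given `θ_k` computable atom by atom.
-/

open MeasureTheory ProbabilityTheory
open scoped RealInnerProductSpace NNReal

section Descent

variable {E : Type*} [NormedAddCommGroup E] [InnerProductSpace ℝ E] [CompleteSpace E]
  {f : E → ℝ} {K : ℝ≥0}

theorem descent_lemma (hf : Differentiable ℝ f) (hlip : LipschitzWith K (gradient f)) (x v : E) :
    f (x + v) ≤ f x + ⟪gradient f x, v⟫ + K / 2 * ‖v‖ ^ 2 := by
  -- `φ` has nonpositive derivative on `[0, ∞)`, and `φ 1 ≤ φ 0` is the claim
  set φ : ℝ → ℝ := fun s => f (x + s • v) - s * ⟪gradient f x, v⟫ - K / 2 * s ^ 2 * ‖v‖ ^ 2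
  have hφ' : ∀ s, HasDerivAt φ
      (⟪gradient f (x + s • v), v⟫ - ⟪gradient f x, v⟫ - K * s * ‖v‖ ^ 2) s := by
    intro s
    have hline : HasDerivAt (fun r : ℝ => x + r • v) v s := by
      simpa using ((hasDerivAt_id s).smul_const v).const_add x
    have hfline := (hf (x + s • v)).hasGradientAt.hasFDerivAt.comp_hasDerivAt s hline
    rw [InnerProductSpace.toDual_apply_apply] at hfline
    have hquad : HasDerivAt (fun r : ℝ => K / 2 * r ^ 2 * ‖v‖ ^ 2) (K * s * ‖v‖ ^ 2) s :=
      (((hasDerivAt_pow 2 s).const_mul ((K : ℝ) / 2)).mul_const _).congr_deriv (by push_cast; ring)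
    exact (hfline.sub (hasDerivAt_mul_const _)).sub hquad
  have hφ'_nonpos : ∀ s, 0 ≤ s →
      ⟪gradient f (x + s • v), v⟫ - ⟪gradient f x, v⟫ - K * s * ‖v‖ ^ 2 ≤ 0 := by
    intro s hs
    have hdist : ‖gradient f (x + s • v) - gradient f x‖ ≤ K * (s * ‖v‖) := by
      simpa [dist_eq_norm, norm_smul, abs_of_nonneg hs] using hlip.dist_le_mul (x + s • v) x
    have hinner := (real_inner_le_norm (gradient f (x + s • v) - gradient f x) v).trans
      (mul_le_mul_of_nonneg_right hdist (norm_nonneg v))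
    rw [inner_sub_left] at hinner
    nlinarith
  have hanti : AntitoneOn φ (Set.Ici 0) :=
    antitoneOn_of_hasDerivWithinAt_nonpos (convex_Ici 0)
      (fun s _ => (hφ' s).continuousAt.continuousWithinAt)
      (fun s _ => (hφ' s).hasDerivWithinAt)
      (fun s hs => hφ'_nonpos s (interior_subset hs))
  have h10 : φ 1 ≤ φ 0 := hanti Set.self_mem_Ici (Set.mem_Ici.2 zero_le_one) zero_le_one
  simp only [φ, zero_smul, add_zero, one_smul, zero_mul, sub_zero, one_mul, one_pow] at h10
  linarith

theorem integral_descent_step {Ω : Type*} [MeasurableSpace Ω] {P : Measure Ω}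
    (hf : Differentiable ℝ f) (hlip : LipschitzWith K (gradient f))
    {x y g : Ω → E} {η : ℝ} (hy : ∀ ω, y ω = x ω - η • g ω)
    (hfx : Integrable (fun ω => f (x ω)) P) (hfy : Integrable (fun ω => f (y ω)) P)
    (hinner : Integrable (fun ω => ⟪gradient f (x ω), g ω⟫) P)
    (hg : Integrable (fun ω => ‖g ω‖ ^ 2) P) :
    η * ∫ ω, ⟪gradient f (x ω), g ω⟫ ∂P
      ≤ ∫ ω, f (x ω) ∂P - ∫ ω, f (y ω) ∂P + K / 2 * (η ^ 2 * ∫ ω, ‖g ω‖ ^ 2 ∂P) := by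
  have hpointwise : ∀ ω, η * ⟪gradient f (x ω), g ω⟫
      ≤ f (x ω) - f (y ω) + K / 2 * (η ^ 2 * ‖g ω‖ ^ 2) := by
    intro ω
    have := descent_lemma hf hlip (x ω) (-(η • g ω))
    rw [← sub_eq_add_neg, ← hy, inner_neg_right, real_inner_smul_right, norm_neg, norm_smul,
      mul_pow, Real.norm_eq_abs, sq_abs] at this
    linarith
  have hdiff : Integrable (fun ω => f (x ω) - f (y ω)) P := hfx.sub hfy
  have hquad : Integrable (fun ω => K / 2 * (η ^ 2 * ‖g ω‖ ^ 2)) P := (hg.const_mul _).const_mul _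
  have := integral_mono (g := fun ω => f (x ω) - f (y ω) + K / 2 * (η ^ 2 * ‖g ω‖ ^ 2))
    (hinner.const_mul η) (hdiff.add hquad) hpointwise
  rwa [integral_const_mul, integral_add hdiff hquad, integral_sub hfx hfy, integral_const_mul,
    integral_const_mul] at this

end Descent

theorem Set.Finite.range_of_recursion {Ω α ι : Type*} [Finite ι] {x : Ω → ℕ → α}
    {idx : ℕ → Ω → ι} (F : ℕ → α → ι → α) {k₀ : ℕ}
    (hk₀ : (Set.range fun ω => x ω k₀).Finite)
    (hstep : ∀ ω k, x ω (k + 1) = F k (x ω k) (idx k ω)) :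
    ∀ k, k₀ ≤ k → (Set.range fun ω => x ω k).Finite := by
  intro k hk
  induction k, hk using Nat.le_induction with
  | base => exact hk₀
  | succ k _ ih =>
    refine (ih.image2 (F k) Set.finite_univ).subset ?_
    rintro _ ⟨ω, rfl⟩
    show x ω (k + 1) ∈ _
    rw [hstep ω k]
    exact Set.mem_image2_of_mem ⟨ω, rfl⟩ (Set.mem_univ _)

theorem inner_comp_eq_sum_indicator {Ω α E : Type*} [NormedAddCommGroup E]
    [InnerProductSpace ℝ E] {X : Ω → α} {S : Finset α} (hS : ∀ ω, X ω ∈ S) (q : α → E)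
    (h : Ω → E) (ω : Ω) :
    ⟪q (X ω), h ω⟫ = ∑ a ∈ S, (X ⁻¹' {a}).indicator (fun ω' => ⟪q a, h ω'⟫) ω := by
  rw [Finset.sum_eq_single_of_mem (X ω) (hS ω)]
  · simp
  · intro a _ ha
    exact Set.indicator_of_notMem (show ω ∉ X ⁻¹' {a} from Ne.symm ha) _

section FiniteRange

variable {Ω α : Type*} [MeasurableSpace Ω] [MeasurableSpace α] [MeasurableSingletonClass α]
  {X : Ω → α} {P : Measure Ω}

theorem Measurable.stronglyMeasurable_comp_of_countable_range {β : Type*} [TopologicalSpace β]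
    (hX : Measurable X) (hX_count : (Set.range X).Countable) (Φ : α → β) :
    StronglyMeasurable fun ω => Φ (X ω) :=
  have : Countable (Set.range X) := hX_count.to_subtype
  (StronglyMeasurable.of_discrete (f := fun a : Set.range X => Φ a)).comp_measurable
    hX.rangeFactorization

theorem Measurable.integrable_comp_of_finite_range {β : Type*} [NormedAddCommGroup β]
    [IsFiniteMeasure P] (hX : Measurable X) (hX_fin : (Set.range X).Finite) (Φ : α → β) :
    Integrable (fun ω => Φ (X ω)) P := by
  obtain ⟨C, hC⟩ := (hX_fin.image (‖Φ ·‖)).bddAbove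
  exact .of_bound
    (hX.stronglyMeasurable_comp_of_countable_range hX_fin.countable Φ).aestronglyMeasurable
    C (ae_of_all _ fun ω => hC ⟨X ω, ⟨ω, rfl⟩, rfl⟩)

variable {E : Type*} [NormedAddCommGroup E] [InnerProductSpace ℝ E]

theorem Measurable.integrable_inner_comp_of_finite_range (hX : Measurable X)
    (hX_fin : (Set.range X).Finite) (q : α → E) {h : Ω → E} (hh : Integrable h P) :
    Integrable (fun ω => ⟪q (X ω), h ω⟫) P := by
  simp_rw [inner_comp_eq_sum_indicator (fun ω => hX_fin.mem_toFinset.2 ⟨ω, rfl⟩) q h]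
  exact integrable_finsetSum _ fun a _ =>
    (hh.const_inner (q a)).indicator (hX (measurableSet_singleton a))

variable [CompleteSpace E]

theorem integral_inner_comp_eq_sum (hX : Measurable X) (hX_fin : (Set.range X).Finite)
    (q : α → E) {h : Ω → E} (hh : Integrable h P) :
    ∫ ω, ⟪q (X ω), h ω⟫ ∂P = ∑ a ∈ hX_fin.toFinset, ⟪q a, ∫ ω in X ⁻¹' {a}, h ω ∂P⟫ := by
  simp_rw [inner_comp_eq_sum_indicator (fun ω => hX_fin.mem_toFinset.2 ⟨ω, rfl⟩) q h]
  rw [integral_finsetSum _ fun a _ =>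
    (hh.const_inner (q a)).indicator (hX (measurableSet_singleton a))]
  refine Finset.sum_congr rfl fun a _ => ?_
  rw [integral_indicator (hX (measurableSet_singleton a)), integral_inner hh.restrict]

variable [IsFiniteMeasure P]

theorem integral_inner_comp_condExp (hX : Measurable X) (hX_fin : (Set.range X).Finite)
    (q : α → E) {g : Ω → E} (hg : Integrable g P) :
    ∫ ω, ⟪q (X ω), P[g | MeasurableSpace.comap X inferInstance] ω⟫ ∂P
      = ∫ ω, ⟪q (X ω), g ω⟫ ∂P := by
  rw [integral_inner_comp_eq_sum hX hX_fin q integrable_condExp,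
    integral_inner_comp_eq_sum hX hX_fin q hg]
  refine Finset.sum_congr rfl fun a _ => ?_
  rw [setIntegral_condExp hX.comap_le hg ⟨{a}, measurableSet_singleton a, rfl⟩]

theorem integral_inner_comp_eq_add_bias (hX : Measurable X) (hX_fin : (Set.range X).Finite)
    (q : α → E) {g : Ω → E} (hg : Integrable g P) :
    ∫ ω, ⟪q (X ω), g ω⟫ ∂P = ∫ ω, ‖q (X ω)‖ ^ 2 ∂P
      + ∫ ω, ⟪q (X ω), P[g | MeasurableSpace.comap X inferInstance] ω - q (X ω)⟫ ∂P := by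
  simp_rw [inner_sub_right, real_inner_self_eq_norm_sq]
  rw [integral_sub (hX.integrable_inner_comp_of_finite_range hX_fin q integrable_condExp)
      (hX.integrable_comp_of_finite_range hX_fin fun a => ‖q a‖ ^ 2),
    integral_inner_comp_condExp hX hX_fin q hg, add_sub_cancel]

theorem Measurable.integrable_inner_comp_condExp_sub (hX : Measurable X)
    (hX_fin : (Set.range X).Finite) (q : α → E) (g : Ω → E) :
    Integrable (fun ω => ⟪q (X ω), P[g | MeasurableSpace.comap X inferInstance] ω - q (X ω)⟫) P :=
  hX.integrable_inner_comp_of_finite_range hX_fin q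
    (h := fun ω => P[g | MeasurableSpace.comap X inferInstance] ω - q (X ω))
    (integrable_condExp.sub (hX.integrable_comp_of_finite_range hX_fin q))

end FiniteRange

theorem integral_descent_step_add_bias {E Ω : Type*} [NormedAddCommGroup E]
    [InnerProductSpace ℝ E] [CompleteSpace E] [MeasurableSpace E] [MeasurableSingletonClass E]
    [MeasurableSpace Ω] {P : Measure Ω} [IsFiniteMeasure P] {f : E → ℝ}
    (hf : Differentiable ℝ f) {K : ℝ≥0} (hlip : LipschitzWith K (gradient f))
    {x y g : Ω → E} {η : ℝ} (hy : ∀ ω, y ω = x ω - η • g ω)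
    (hx : Measurable x) (hx_fin : (Set.range x).Finite) (hg : Integrable g P)
    (hfy : Integrable (fun ω => f (y ω)) P) (hg_sq : Integrable (fun ω => ‖g ω‖ ^ 2) P) :
    η * ∫ ω, ‖gradient f (x ω)‖ ^ 2 ∂P
        + η * ∫ ω, ⟪gradient f (x ω),
            P[g | MeasurableSpace.comap x inferInstance] ω - gradient f (x ω)⟫ ∂P
      ≤ ∫ ω, f (x ω) ∂P - ∫ ω, f (y ω) ∂P + K / 2 * (η ^ 2 * ∫ ω, ‖g ω‖ ^ 2 ∂P) := by
  rw [← mul_add, ← integral_inner_comp_eq_add_bias hx hx_fin (gradient f) hg]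
  exact integral_descent_step hf hlip hy (hx.integrable_comp_of_finite_range hx_fin f) hfy
    (hx.integrable_inner_comp_of_finite_range hx_fin _ hg) hg_sq

theorem Finset.inf'_le_of_weighted_descent {t : ℕ} (hne : (Finset.Icc 1 t).Nonempty)
    {η a b c F : ℕ → ℝ} {γ Fmin : ℝ} (hη : ∀ k ∈ Finset.Icc 1 t, 0 < η k)
    (hstep : ∀ k ∈ Finset.Icc 1 t, η k * a k + η k * b k ≤ F k - F (k + 1) + γ * c k)
    (hFmin : Fmin ≤ F (t + 1)) :
    (Finset.Icc 1 t).inf' hne a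
      ≤ (F 1 - Fmin) / (∑ k ∈ Finset.Icc 1 t, η k) + γ * (∑ k ∈ Finset.Icc 1 t, c k)
          / (∑ k ∈ Finset.Icc 1 t, η k) - (∑ k ∈ Finset.Icc 1 t, η k * b k)
          / (∑ k ∈ Finset.Icc 1 t, η k) := by
  have hsum_pos : 0 < ∑ k ∈ Finset.Icc 1 t, η k := Finset.sum_pos hη hne
  have hmin : (Finset.Icc 1 t).inf' hne a * ∑ k ∈ Finset.Icc 1 t, η k
      ≤ ∑ k ∈ Finset.Icc 1 t, η k * a k := by
    rw [Finset.mul_sum]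
    exact Finset.sum_le_sum fun k hk =>
      (mul_comm _ _).trans_le (mul_le_mul_of_nonneg_left (Finset.inf'_le _ hk) (hη k hk).le)
  have htelescope : ∑ k ∈ Finset.Icc 1 t, (F k - F (k + 1)) = F 1 - F (t + 1) := by
    rw [← neg_sub, ← Finset.sum_Icc_sub (Finset.nonempty_Icc.1 hne) F,
      ← Finset.sum_neg_distrib]
    simp only [neg_sub]
  have hsum := Finset.sum_le_sum hstep
  rw [Finset.sum_add_distrib, Finset.sum_add_distrib, htelescope, ← Finset.mul_sum] at hsum
  rw [← add_div, ← sub_div, le_div_iff₀ hsum_pos]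
  linarith

theorem stmt5_general {E : Type*} [NormedAddCommGroup E] [InnerProductSpace ℝ E]
    [CompleteSpace E] [MeasurableSpace E] [BorelSpace E]
    {N : ℕ}
    (L : Fin N → E → ℝ) (hdiff : ∀ i, Differentiable ℝ (L i))
    (Lhat : E → ℝ) (hLhat : Lhat = fun x => (N : ℝ)⁻¹ * ∑ i : Fin N, L i x)
    (M : ℝ) (hM : 0 < M)
    (hlip : LipschitzWith (Real.toNNReal M) (gradient Lhat))
    (Lstar : ℝ) (hbdd : ∀ x, Lstar ≤ Lhat x)
    {Ω : Type*} [MeasurableSpace Ω] (P : Measure Ω) [IsProbabilityMeasure P]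
    (i : ℕ → Ω → Fin N) (hmeas : ∀ k, Measurable (i k))
    (η : ℕ → ℝ) (hη : ∀ k, 0 < η k)
    (θ1 : E) (θ : Ω → ℕ → E) (hθmeas : ∀ k, Measurable fun ω => θ ω k)
    (hinit : ∀ ω, θ ω 1 = θ1)
    (hupd : ∀ ω k, θ ω (k + 1) = θ ω k - η k • gradient (L (i k ω)) (θ ω k))
    (t : ℕ) (htne : (Finset.Icc 1 t).Nonempty) :
    (Finset.Icc 1 t).inf' htne (fun k => ∫ ω, ‖gradient Lhat (θ ω k)‖ ^ 2 ∂P)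
      ≤ (Lhat θ1 - Lstar) / (∑ k ∈ Finset.Icc 1 t, η k)
        + M / 2 * (∑ k ∈ Finset.Icc 1 t,
              η k ^ 2 * ∫ ω, ‖gradient (L (i k ω)) (θ ω k)‖ ^ 2 ∂P)
            / (∑ k ∈ Finset.Icc 1 t, η k)
        - ∫ ω, (∑ k ∈ Finset.Icc 1 t, η k *
              ⟪gradient Lhat (θ ω k),
                (P[(fun ω' => gradient (L (i k ω')) (θ ω' k)) |
                    MeasurableSpace.comap (fun ω' => θ ω' k) inferInstance]) ω
                  - gradient Lhat (θ ω k)⟫)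
            / (∑ k ∈ Finset.Icc 1 t, η k) ∂P := by
  lift M to ℝ≥0 using hM.le
  rw [Real.toNNReal_coe] at hlip
  have hLhat_diff : Differentiable ℝ Lhat :=
    hLhat ▸ (Differentiable.fun_sum fun j _ => hdiff j).const_mul _
  have hθ_fin : ∀ k, 1 ≤ k → (Set.range fun ω => θ ω k).Finite :=
    Set.Finite.range_of_recursion (fun k x j => x - η k • gradient (L j) x)
      ((Set.finite_singleton θ1).subset (Set.range_subset_iff.2 hinit)) hupd
  have hθi_fin : ∀ k, 1 ≤ k → (Set.range fun ω => (θ ω k, i k ω)).Finite := fun k hk =>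
    ((hθ_fin k hk).prod (Set.toFinite _)).subset (Set.range_pair_subset _ _)
  have hint : ∀ k, 1 ≤ k → ∀ Φ : E × Fin N → ℝ, Integrable (fun ω => Φ (θ ω k, i k ω)) P :=
    fun k hk => ((hθmeas k).prodMk (hmeas k)).integrable_comp_of_finite_range (hθi_fin k hk)
  have hLstar : Lstar ≤ ∫ ω, Lhat (θ ω (t + 1)) ∂P := by
    simpa using integral_mono (integrable_const Lstar)
      (hint (t + 1) (by omega) fun p => Lhat p.1) fun ω => hbdd (θ ω (t + 1))
  have key := Finset.inf'_le_of_weighted_descent htne (fun k _ => hη k) (fun k hk =>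
    have hk1 := (Finset.mem_Icc.1 hk).1
    integral_descent_step_add_bias hLhat_diff hlip (fun ω => hupd ω k) (hθmeas k) (hθ_fin k hk1)
      (((hθmeas k).prodMk (hmeas k)).integrable_comp_of_finite_range (hθi_fin k hk1)
        fun p => gradient (L p.2) p.1) (hint (k + 1) (by omega) fun p => Lhat p.1)
      (hint k hk1 fun p => ‖gradient (L p.2) p.1‖ ^ 2)) hLstar
  have hθ1 : ∫ ω, Lhat (θ ω 1) ∂P = Lhat θ1 := by simp [hinit]
  rw [hθ1] at key
  rw [integral_div, integral_finsetSum _ fun k hk =>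
    ((hθmeas k).integrable_inner_comp_condExp_sub (hθ_fin k (Finset.mem_Icc.1 hk).1) _ _).const_mul
      (η k)]
  simp_rw [integral_const_mul]
  exact key

/-- t-step bound for SGD with possibly biased batch sampling,
with the additional bias term involving the conditional expectation of the
sampled gradient given the current iterate. -/
theorem stmt5 {E : Type*} [NormedAddCommGroup E] [InnerProductSpace ℝ E]
    [CompleteSpace E] [MeasurableSpace E] [BorelSpace E]
    {N : ℕ} (hN : 0 < N)
    (L : Fin N → E → ℝ) (hdiff : ∀ i, Differentiable ℝ (L i))
    (Lhat : E → ℝ) (hLhat : Lhat = fun x => (N : ℝ)⁻¹ * ∑ i : Fin N, L i x)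
    (M : ℝ) (hM : 0 < M)
    (hlip : LipschitzWith (Real.toNNReal M) (gradient Lhat))
    (Lstar : ℝ) (hbdd : ∀ x, Lstar ≤ Lhat x) (hstar : Lstar = ⨅ x, Lhat x)
    {Ω : Type*} [MeasurableSpace Ω] (P : Measure Ω) [IsProbabilityMeasure P]
    (i : ℕ → Ω → Fin N) (hmeas : ∀ k, Measurable (i k))
    (η : ℕ → ℝ) (hη : ∀ k, 0 < η k)
    (θ1 : E) (θ : Ω → ℕ → E) (hθmeas : ∀ k, Measurable fun ω => θ ω k)
    (hinit : ∀ ω, θ ω 1 = θ1)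
    (hupd : ∀ ω k, θ ω (k + 1) = θ ω k - η k • gradient (L (i k ω)) (θ ω k))
    (t : ℕ) (ht : 1 ≤ t) (htne : (Finset.Icc 1 t).Nonempty) :
    (Finset.Icc 1 t).inf' htne (fun k => ∫ ω, ‖gradient Lhat (θ ω k)‖ ^ 2 ∂P)
      ≤ (Lhat θ1 - Lstar) / (∑ k ∈ Finset.Icc 1 t, η k)
        + M / 2 * (∑ k ∈ Finset.Icc 1 t,
              η k ^ 2 * ∫ ω, ‖gradient (L (i k ω)) (θ ω k)‖ ^ 2 ∂P)
            / (∑ k ∈ Finset.Icc 1 t, η k)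
        - ∫ ω, (∑ k ∈ Finset.Icc 1 t, η k *
              ⟪gradient Lhat (θ ω k),
                (P[(fun ω' => gradient (L (i k ω')) (θ ω' k)) |
                    MeasurableSpace.comap (fun ω' => θ ω' k) inferInstance]) ω
                  - gradient Lhat (θ ω k)⟫)
            / (∑ k ∈ Finset.Icc 1 t, η k) ∂P :=
  stmt5_general L hdiff Lhat hLhat M hM hlip Lstar hbdd P i hmeas η hη θ1 θ hθmeas hinit hupd t htne
end

section
/- With ξ̄ and ξ† as above (i.i.d. mean-μ, sd-σ variables; g bounded in [m, M] with m > 0; K_N ≥ 0 the normalized expected sum of standardized top order statistics), if (σ/μ)·K_N ≥ (M/m − 1) then E[ξ†] ≥ E[ξ̄]; that is, sorting the data in decreasing order increases the expected second-order SGD correction term. -/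
/-!
Among the first `N` indices the sorted sample is a permutation of `X₀, …, X_{N-1}`, and in
`g (Xs j) * Xs k` with `k < j` the factor `g` sits at the smaller and the weight at the larger
value; so `ξ†` is the pair sum of `g (min (X j) (X k)) * max (X j) (X k)`, while independence
gives `E[ξ̄] ≤ M μ`. For an i.i.d. pair `(A, B)` with `E A ≥ 0` and `h = g - m ≥ 0`, splitting by
which value is smaller and swapping writes `E[h (min A B) * max A B]` as
`E[h A * B; A ≤ B] + E[h A * B; A < B]`. Conditioning on `A = a`, the inner expectations
`E[B; B ≥ a]` and `E[B; B > a]` are nonnegative: for `a > 0` the integrand is positive, and for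
`a ≤ 0` the discarded part `E[B; B < a]` (resp. `B ≤ a`) is nonpositive. Hence `E[ξ†] ≥ m S`, where
`S = μ + σ K` is the normalized expected sum of the top order statistics, and the hypothesis on
`K` says exactly `m S ≥ M μ`.
-/

open MeasureTheory ProbabilityTheory Finset

lemma sum_range_sum_range_eq_two_nsmul_add {β : Type*} [AddCommMonoid β] (f : ℕ → ℕ → β)
    (hf : ∀ j k, f j k = f k j) (n : ℕ) :
    ∑ j ∈ range n, ∑ k ∈ range n, f j k
      = 2 • ∑ j ∈ range n, ∑ k ∈ range j, f j k + ∑ j ∈ range n, f j j := by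
  induction n with
  | zero => simp
  | succ n ih =>
    have hsymm : ∑ j ∈ range n, f j n = ∑ k ∈ range n, f n k := sum_congr rfl fun j _ => hf j n
    simp only [sum_range_succ, sum_add_distrib, ih, hsymm, smul_add, two_nsmul]
    abel

lemma sum_range_sum_range_comp_perm {α : Type*} {N : ℕ} (F : α → α → ℝ)
    (hF : ∀ x y, F x y = F y x) {v w : ℕ → α} (e : Equiv.Perm (Fin N))
    (hw : ∀ i : Fin N, w i = v (e i)) :
    ∑ j ∈ range N, ∑ k ∈ range j, F (w j) (w k) = ∑ j ∈ range N, ∑ k ∈ range j, F (v j) (v k) := by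
  have hsq : ∑ j ∈ range N, ∑ k ∈ range N, F (w j) (w k)
      = ∑ j ∈ range N, ∑ k ∈ range N, F (v j) (v k) := by
    simp only [← Fin.sum_univ_eq_sum_range, hw]
    exact Fintype.sum_equiv e _ _ fun j => Fintype.sum_equiv e _ _ fun k => rfl
  have hdiag : ∑ j ∈ range N, F (w j) (w j) = ∑ j ∈ range N, F (v j) (v j) := by
    simp only [← Fin.sum_univ_eq_sum_range, hw]
    exact Fintype.sum_equiv e _ _ fun j => rfl
  rw [sum_range_sum_range_eq_two_nsmul_add _ (fun j k => hF _ _),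
    sum_range_sum_range_eq_two_nsmul_add _ (fun j k => hF _ _), hdiag] at hsq
  simpa using hsq

lemma sum_range_sum_range_of_antitone_perm {α : Type*} [LinearOrder α] {N : ℕ}
    (F : α → α → ℝ) {v w : ℕ → α} (e : Equiv.Perm (Fin N)) (hw : ∀ i : Fin N, w i = v (e i))
    (hanti : ∀ j k, j ≤ k → k < N → w k ≤ w j) :
    ∑ j ∈ range N, ∑ k ∈ range j, F (w j) (w k)
      = ∑ j ∈ range N, ∑ k ∈ range j, F (min (v j) (v k)) (max (v j) (v k)) := by
  rw [← sum_range_sum_range_comp_perm (fun x y => F (min x y) (max x y))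
    (fun x y => by rw [min_comm, max_comm]) e hw]
  refine sum_congr rfl fun j hj => sum_congr rfl fun k hk => ?_
  have hle := hanti k j (mem_range.1 hk).le (mem_range.1 hj)
  rw [min_eq_left hle, max_eq_right hle]

lemma two_div_mul_pred_nonneg (N : ℕ) : (0 : ℝ) ≤ 2 / (N * (N - 1)) := by
  rcases N with _ | n
  · simp
  · push_cast
    rw [add_sub_cancel_right]
    positivity

lemma two_div_mul_sum_range_sum_range_const {N : ℕ} (hN : 2 ≤ N) (r : ℝ) :
    2 / (N * (N - 1) : ℝ) * ∑ j ∈ range N, ∑ _k ∈ range j, r = r := by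
  have hgauss : (∑ j ∈ range N, (j : ℝ)) * 2 = N * (N - 1) := by
    have h := congrArg (Nat.cast : ℕ → ℝ) (sum_range_id_mul_two N)
    push_cast [Nat.cast_sub (by omega : 1 ≤ N)] at h
    exact h
  have hsum : (∑ j ∈ range N, (j : ℝ)) ≠ 0 := by
    have : (2 : ℝ) ≤ N := by exact_mod_cast hN
    nlinarith
  simp only [sum_const, card_range, nsmul_eq_mul, ← sum_mul]
  rw [← hgauss]
  field_simp

lemma two_div_mul_sum_range_sum_range_le {N : ℕ} (hN : 2 ≤ N) {a : ℕ → ℕ → ℝ} {r : ℝ}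
    (h : ∀ j < N, ∀ k < j, a j k ≤ r) :
    2 / (N * (N - 1) : ℝ) * ∑ j ∈ range N, ∑ k ∈ range j, a j k ≤ r := by
  conv_rhs => rw [← two_div_mul_sum_range_sum_range_const hN r]
  exact mul_le_mul_of_nonneg_left (sum_le_sum fun j hj => sum_le_sum fun k hk =>
    h j (mem_range.1 hj) k (mem_range.1 hk)) (two_div_mul_pred_nonneg N)

lemma le_two_div_mul_sum_range_sum_range {N : ℕ} (hN : 2 ≤ N) {a : ℕ → ℕ → ℝ} {r : ℝ}
    (h : ∀ j < N, ∀ k < j, r ≤ a j k) :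
    r ≤ 2 / (N * (N - 1) : ℝ) * ∑ j ∈ range N, ∑ k ∈ range j, a j k := by
  conv_lhs => rw [← two_div_mul_sum_range_sum_range_const hN r]
  exact mul_le_mul_of_nonneg_left (sum_le_sum fun j hj => sum_le_sum fun k hk =>
    h j (mem_range.1 hj) k (mem_range.1 hk)) (two_div_mul_pred_nonneg N)

section Real

variable {ν : Measure ℝ}

lemma setIntegral_id_nonneg_of_threshold (hν : Integrable id ν) (h0 : 0 ≤ ∫ b, b ∂ν)
    {S : Set ℝ} (hS : MeasurableSet S) {a : ℝ} (hS_ge : ∀ b ∈ S, a ≤ b)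
    (hS_le : ∀ b ∉ S, b ≤ a) :
    0 ≤ ∫ b in S, b ∂ν := by
  rcases le_or_gt a 0 with ha | ha
  · have hcompl : ∫ b in Sᶜ, b ∂ν ≤ 0 :=
      setIntegral_nonpos hS.compl fun b hb => (hS_le b hb).trans ha
    have := integral_add_compl hS hν
    simp only [id] at this
    linarith
  · exact setIntegral_nonneg hS fun b hb => ha.le.trans (hS_ge b hb)

lemma integral_indicator_mul_snd_nonneg [SFinite ν] (hν : Integrable id ν)
    (h0 : 0 ≤ ∫ b, b ∂ν) {h : ℝ → ℝ} (hh : ∀ x, 0 ≤ h x) {T : Set (ℝ × ℝ)}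
    (hT : MeasurableSet T) (hT_ge : ∀ p ∈ T, p.1 ≤ p.2) (hT_le : ∀ p ∉ T, p.2 ≤ p.1) :
    0 ≤ ∫ p, T.indicator (fun p => h p.1 * p.2) p ∂ν.prod ν := by
  by_cases hi : Integrable (T.indicator fun p => h p.1 * p.2) (ν.prod ν)
  · rw [integral_prod _ hi]
    refine integral_nonneg fun a => ?_
    have hslice : (fun b => T.indicator (fun p => h p.1 * p.2) (a, b))
        = (Prod.mk a ⁻¹' T).indicator fun b => h a * b := rfl
    rw [hslice, integral_indicator (measurable_prodMk_left hT), integral_const_mul]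
    exact mul_nonneg (hh a) (setIntegral_id_nonneg_of_threshold hν h0
      (measurable_prodMk_left hT) (fun b hb => hT_ge _ hb) (fun b hb => hT_le _ hb))
  · rw [integral_undef hi]

lemma integral_comp_min_mul_max_nonneg [IsFiniteMeasure ν] (hν : Integrable id ν)
    (h0 : 0 ≤ ∫ b, b ∂ν) {h : ℝ → ℝ} (hh : Measurable h) (hh_nonneg : ∀ x, 0 ≤ h x)
    {C : ℝ} (hh_le : ∀ x, h x ≤ C) :
    0 ≤ ∫ p, h (min p.1 p.2) * max p.1 p.2 ∂ν.prod ν := by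
  set f : ℝ × ℝ → ℝ := fun p => h p.1 * p.2
  have hf : Integrable f (ν.prod ν) :=
    (hν.comp_snd ν).bdd_mul (hh.comp measurable_fst).aestronglyMeasurable
      (ae_of_all _ fun p => by
        rw [Real.norm_eq_abs, abs_of_nonneg (hh_nonneg _)]
        exact hh_le _)
  have hle : MeasurableSet {p : ℝ × ℝ | p.1 ≤ p.2} :=
    measurableSet_le measurable_fst measurable_snd
  have hlt : MeasurableSet {p : ℝ × ℝ | p.1 < p.2} :=
    measurableSet_lt measurable_fst measurable_snd
  have hsplit : ∀ p : ℝ × ℝ, h (min p.1 p.2) * max p.1 p.2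
      = {p : ℝ × ℝ | p.1 ≤ p.2}.indicator f p + {p : ℝ × ℝ | p.1 < p.2}.indicator f p.swap := by
    rintro ⟨a, b⟩
    rcases le_or_gt a b with hab | hab
    · simp [f, hab, not_lt.2 hab]
    · simp [f, hab, not_le.2 hab, hab.le]
  have hf_swap : Integrable (fun p => {p : ℝ × ℝ | p.1 < p.2}.indicator f p.swap) (ν.prod ν) :=
    (hf.indicator hlt).swap
  rw [integral_congr_ae (ae_of_all _ hsplit), integral_add (hf.indicator hle) hf_swap,
    integral_prod_swap]
  exact add_nonneg
    (integral_indicator_mul_snd_nonneg hν h0 hh_nonneg hle (fun _ => id)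
      fun _ hp => (not_le.1 hp).le)
    (integral_indicator_mul_snd_nonneg hν h0 hh_nonneg hlt (fun _ hp => hp.le)
      fun _ hp => not_lt.1 hp)

end Real

section Sample

variable {Ω : Type*} [MeasurableSpace Ω] {P : Measure Ω}

lemma mul_integral_max_le_integral_comp_min_mul_max [IsFiniteMeasure P] {A B : Ω → ℝ}
    (hA : Measurable A) (hB : Measurable B) (hAB : IndepFun A B P) (hid : IdentDistrib A B P P)
    (hA_int : Integrable A P) (hA_mean : 0 ≤ ∫ ω, A ω ∂P) {g : ℝ → ℝ} (hg : Measurable g) {m M : ℝ}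
    (hgm : ∀ x, m ≤ g x) (hgM : ∀ x, g x ≤ M) :
    m * ∫ ω, max (A ω) (B ω) ∂P ≤ ∫ ω, g (min (A ω) (B ω)) * max (A ω) (B ω) ∂P := by
  set ν := P.map A
  have hν : Integrable id ν :=
    (integrable_map_measure aestronglyMeasurable_id hA.aemeasurable).2 hA_int
  have h0 : 0 ≤ ∫ b, id b ∂ν := by
    rwa [integral_map hA.aemeasurable aestronglyMeasurable_id]
  have hmap : P.map (fun ω => (A ω, B ω)) = ν.prod ν := by
    rw [(indepFun_iff_map_prod_eq_prod_map_map hA.aemeasurable hB.aemeasurable).1 hAB,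
      ← hid.map_eq]
  have hshift := integral_comp_min_mul_max_nonneg (h := fun x => g x - m) hν h0
    (by fun_prop) (fun x => sub_nonneg.2 (hgm x)) (fun x => sub_le_sub_right (hgM x) m)
  have hmeas : Measurable fun p : ℝ × ℝ => (g (min p.1 p.2) - m) * max p.1 p.2 := by fun_prop
  rw [← hmap, integral_map (hA.aemeasurable.prodMk hB.aemeasurable)
    hmeas.aestronglyMeasurable] at hshift
  have hmax : Integrable (fun ω => max (A ω) (B ω)) P :=
    hA_int.sup (hid.integrable_iff.1 hA_int)
  have hprod : Integrable (fun ω => g (min (A ω) (B ω)) * max (A ω) (B ω)) P :=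
    hmax.bdd_mul (hg.comp (hA.min hB)).aestronglyMeasurable
      (ae_of_all _ fun ω => abs_le_max_abs_abs (hgm _) (hgM _))
  simp only [sub_mul] at hshift
  rw [integral_sub hprod (hmax.const_mul m), integral_const_mul] at hshift
  linarith

lemma integral_comp_mul_le_of_indepFun [IsProbabilityMeasure P] {A B : Ω → ℝ}
    (hAB : IndepFun A B P) (hA : Measurable A) (hB : AEStronglyMeasurable B P)
    (hB_mean : 0 ≤ ∫ ω, B ω ∂P) {g : ℝ → ℝ} (hg : Measurable g) {m M : ℝ}
    (hgm : ∀ x, m ≤ g x) (hgM : ∀ x, g x ≤ M) :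
    ∫ ω, g (A ω) * B ω ∂P ≤ M * ∫ ω, B ω ∂P := by
  have hind : IndepFun (fun ω => g (A ω)) B P := hAB.comp hg measurable_id
  rw [hind.integral_fun_mul_eq_mul_integral (hg.comp hA).aestronglyMeasurable hB]
  refine mul_le_mul_of_nonneg_right ?_ hB_mean
  calc ∫ ω, g (A ω) ∂P
      ≤ ∫ _ω, M ∂P := integral_mono (.of_bound (hg.comp hA).aestronglyMeasurable _
        (ae_of_all _ fun ω => abs_le_max_abs_abs (hgm _) (hgM _))) (integrable_const M)
        fun _ => hgM _
    _ = M := by simp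

lemma integral_sum_range_sum_range {N : ℕ} {f : ℕ → ℕ → Ω → ℝ}
    (hf : ∀ j < N, ∀ k < j, Integrable (f j k) P) :
    ∫ ω, ∑ j ∈ range N, ∑ k ∈ range j, f j k ω ∂P
      = ∑ j ∈ range N, ∑ k ∈ range j, ∫ ω, f j k ω ∂P := by
  rw [integral_finsetSum _ fun j hj => integrable_finsetSum _ fun k hk =>
    hf j (mem_range.1 hj) k (mem_range.1 hk)]
  exact sum_congr rfl fun j hj => integral_finsetSum _ fun k hk =>
    hf j (mem_range.1 hj) k (mem_range.1 hk)

lemma integrable_of_eq_comp_perm {N k : ℕ} {X Y : ℕ → Ω → ℝ} (hX : ∀ i, Integrable (X i) P)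
    (hY : AEStronglyMeasurable (Y k) P)
    (hperm : ∀ ω, ∃ e : Equiv.Perm (Fin N), ∀ i : Fin N, Y i ω = X (e i) ω) (hk : k < N) :
    Integrable (Y k) P := by
  refine (integrable_finsetSum (range N) fun i _ => (hX i).abs).mono' hY
    (ae_of_all _ fun ω => ?_)
  obtain ⟨e, he⟩ := hperm ω
  rw [show Y k ω = X (e ⟨k, hk⟩) ω from he ⟨k, hk⟩, Real.norm_eq_abs]
  exact single_le_sum (f := fun i => |X i ω|) (fun i _ => abs_nonneg _)
    (mem_range.2 (e ⟨k, hk⟩).isLt)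

lemma integral_sum_range_sum_range_sorted {N : ℕ} {X Xs : ℕ → Ω → ℝ}
    (hperm : ∀ ω, ∃ e : Equiv.Perm (Fin N), ∀ i : Fin N, Xs i ω = X (e i) ω)
    (hsorted : ∀ ω, ∀ j k, j ≤ k → k < N → Xs k ω ≤ Xs j ω) (F : ℝ → ℝ → ℝ)
    (hF : ∀ j < N, ∀ k < j,
      Integrable (fun ω => F (min (X j ω) (X k ω)) (max (X j ω) (X k ω))) P) :
    ∫ ω, ∑ j ∈ range N, ∑ k ∈ range j, F (Xs j ω) (Xs k ω) ∂P
      = ∑ j ∈ range N, ∑ k ∈ range j, ∫ ω, F (min (X j ω) (X k ω)) (max (X j ω) (X k ω)) ∂P := by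
  rw [← integral_sum_range_sum_range hF]
  refine integral_congr_ae (ae_of_all _ fun ω => ?_)
  obtain ⟨e, he⟩ := hperm ω
  exact sum_range_sum_range_of_antitone_perm F e he (hsorted ω)

lemma sum_integral_sorted_eq_sum_integral_max {N : ℕ} {X Xs : ℕ → Ω → ℝ}
    (hperm : ∀ ω, ∃ e : Equiv.Perm (Fin N), ∀ i : Fin N, Xs i ω = X (e i) ω)
    (hsorted : ∀ ω, ∀ j k, j ≤ k → k < N → Xs k ω ≤ Xs j ω)
    (hXs : ∀ k < N, Integrable (Xs k) P) (hX : ∀ i, Integrable (X i) P) :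
    ∑ j ∈ range N, ∑ k ∈ range j, ∫ ω, Xs k ω ∂P
      = ∑ j ∈ range N, ∑ k ∈ range j, ∫ ω, max (X j ω) (X k ω) ∂P := by
  rw [← integral_sum_range_sum_range fun j hj k hk => hXs k (hk.trans hj)]
  exact integral_sum_range_sum_range_sorted hperm hsorted (fun _ y => y) fun j _ k _ =>
    (hX j).sup (hX k)

lemma integral_two_div_mul_sum_comp_mul_le [IsProbabilityMeasure P] {N : ℕ} (hN : 2 ≤ N)
    {X : ℕ → Ω → ℝ} (hmeas : ∀ i, Measurable (X i)) (hindep : iIndepFun X P)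
    (hXint : ∀ i, Integrable (X i) P) {μ : ℝ} (hμ : 0 ≤ μ) (hmean : ∀ i, ∫ ω, X i ω ∂P = μ)
    {g : ℝ → ℝ} (hg : Measurable g) {m M : ℝ} (hgm : ∀ x, m ≤ g x) (hgM : ∀ x, g x ≤ M) :
    ∫ ω, 2 / (N * (N - 1) : ℝ) * ∑ j ∈ range N, ∑ k ∈ range j, g (X j ω) * X k ω ∂P
      ≤ M * μ := by
  rw [integral_const_mul, integral_sum_range_sum_range (f := fun j k ω => g (X j ω) * X k ω)
    fun j _ k _ => (hXint k).bdd_mul (hg.comp (hmeas j)).aestronglyMeasurable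
      (ae_of_all _ fun ω => abs_le_max_abs_abs (hgm _) (hgM _))]
  refine two_div_mul_sum_range_sum_range_le hN fun j _ k hk => ?_
  rw [← hmean k]
  exact integral_comp_mul_le_of_indepFun (hindep.indepFun hk.ne') (hmeas j)
    (hmeas k).aestronglyMeasurable (hmean k ▸ hμ) hg hgm hgM

lemma mul_two_div_mul_sum_integral_max_le [IsFiniteMeasure P] {N : ℕ} {X Xs : ℕ → Ω → ℝ}
    (hperm : ∀ ω, ∃ e : Equiv.Perm (Fin N), ∀ i : Fin N, Xs i ω = X (e i) ω)
    (hsorted : ∀ ω, ∀ j k, j ≤ k → k < N → Xs k ω ≤ Xs j ω)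
    (hmeas : ∀ i, Measurable (X i)) (hindep : iIndepFun X P)
    (hident : ∀ i j, IdentDistrib (X i) (X j) P P) (hXint : ∀ i, Integrable (X i) P)
    (hmean : ∀ i, 0 ≤ ∫ ω, X i ω ∂P) {g : ℝ → ℝ} (hg : Measurable g) {m M : ℝ}
    (hgm : ∀ x, m ≤ g x) (hgM : ∀ x, g x ≤ M) :
    m * (2 / (N * (N - 1) : ℝ) * ∑ j ∈ range N, ∑ k ∈ range j, ∫ ω, max (X j ω) (X k ω) ∂P)
      ≤ ∫ ω, 2 / (N * (N - 1) : ℝ) * ∑ j ∈ range N, ∑ k ∈ range j, g (Xs j ω) * Xs k ω ∂P := by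
  rw [integral_const_mul, integral_sum_range_sum_range_sorted hperm hsorted (fun x y => g x * y)
    fun j _ k _ => ((hXint j).sup (hXint k)).bdd_mul
      (hg.comp ((hmeas j).min (hmeas k))).aestronglyMeasurable
      (ae_of_all _ fun ω => abs_le_max_abs_abs (hgm _) (hgM _)), mul_left_comm]
  refine mul_le_mul_of_nonneg_left ?_ (two_div_mul_pred_nonneg N)
  rw [mul_sum]
  refine sum_le_sum fun j _ => ?_
  rw [mul_sum]
  exact sum_le_sum fun k hk => mul_integral_max_le_integral_comp_min_mul_max (hmeas j) (hmeas k)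
    (hindep.indepFun (mem_range.1 hk).ne') (hident j k) (hXint j) (hmean j) hg hgm hgM

lemma le_two_div_mul_sum_integral_max {N : ℕ} (hN : 2 ≤ N) {X : ℕ → Ω → ℝ}
    (hXint : ∀ i, Integrable (X i) P) {μ : ℝ} (hmean : ∀ i, ∫ ω, X i ω ∂P = μ) :
    μ ≤ 2 / (N * (N - 1) : ℝ) * ∑ j ∈ range N, ∑ k ∈ range j, ∫ ω, max (X j ω) (X k ω) ∂P :=
  le_two_div_mul_sum_range_sum_range hN fun j _ k _ =>
    (hmean j).symm.le.trans (integral_mono (hXint j) ((hXint j).sup (hXint k))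
      fun _ => le_max_left _ _)

lemma two_div_mul_sum_integral_sub_div [IsProbabilityMeasure P] {N : ℕ} (hN : 2 ≤ N)
    {Y : ℕ → Ω → ℝ} (hY : ∀ k < N, Integrable (Y k) P) (μ σ : ℝ) :
    2 / (N * (N - 1) : ℝ) * ∑ j ∈ range N, ∑ k ∈ range j, ∫ ω, (Y k ω - μ) / σ ∂P
      = (2 / (N * (N - 1) : ℝ) * ∑ j ∈ range N, ∑ k ∈ range j, ∫ ω, Y k ω ∂P - μ) / σ := by
  have hterm : ∀ k < N, ∫ ω, (Y k ω - μ) / σ ∂P = ((∫ ω, Y k ω ∂P) - μ) / σ := fun k hk => by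
    rw [integral_div, integral_sub (hY k hk) (integrable_const μ), integral_const]
    simp
  rw [sum_congr rfl fun j hj => sum_congr rfl fun k hk =>
    hterm k ((mem_range.1 hk).trans (mem_range.1 hj))]
  simp only [← sum_div, sum_sub_distrib]
  linear_combination (-1 / σ) * two_div_mul_sum_range_sum_range_const hN μ

end Sample

lemma mul_le_mul_of_standardized_gap_ge {μ σ m M S : ℝ} (hμ : 0 < μ) (hm : 0 < m)
    (hμS : μ ≤ S) (hcond : σ / μ * ((S - μ) / σ) ≥ M / m - 1) : M * μ ≤ m * S := by
  -- for `σ = 0` the gap `(S - μ) / σ` is the junk value `0`, and `μ ≤ S` takes over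
  have hσ : σ * ((S - μ) / σ) ≤ S - μ := by
    rcases eq_or_ne σ 0 with rfl | hσ
    · simpa using hμS
    · rw [mul_div_cancel₀ _ hσ]
  have h1 : (M / m - 1) * μ ≤ S - μ := calc
    (M / m - 1) * μ ≤ σ / μ * ((S - μ) / σ) * μ := mul_le_mul_of_nonneg_right hcond hμ.le
    _ = σ * ((S - μ) / σ) := by field_simp
    _ ≤ S - μ := hσ
  have h2 : M * μ = m * ((M / m - 1) * μ + μ) := by field_simp; ring
  rw [h2]
  exact mul_le_mul_of_nonneg_left (by linarith) hm.le

theorem stmt11_general {Ω : Type*} [MeasurableSpace Ω] (P : Measure Ω)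
    [IsProbabilityMeasure P]
    (N : ℕ) (hN : 2 ≤ N)
    (X : ℕ → Ω → ℝ) (hmeas : ∀ i, Measurable (X i))
    (hindep : iIndepFun X P)
    (hident : ∀ i j, IdentDistrib (X i) (X j) P P)
    (μ σ : ℝ) (hμ : 0 < μ)
    (hmean : ∀ i, ∫ ω, X i ω ∂P = μ)
    (Xs : ℕ → Ω → ℝ) (hXsmeas : ∀ i, Measurable (Xs i))
    (hperm : ∀ ω, ∃ e : Equiv.Perm (Fin N), ∀ i : Fin N, Xs i ω = X (e i) ω)
    (hsorted : ∀ ω, ∀ j k, j ≤ k → k < N → Xs k ω ≤ Xs j ω)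
    (g : ℝ → ℝ) (hg : Measurable g)
    (m M : ℝ) (hm : 0 < m)
    (hbound : ∀ x, m ≤ g x ∧ g x ≤ M)
    (ξbar ξdag : Ω → ℝ)
    (hξbar : ξbar = fun ω => (2 / (N * (N - 1) : ℝ)) *
        ∑ j ∈ Finset.range N, ∑ k ∈ Finset.range j, g (X j ω) * X k ω)
    (hξdag : ξdag = fun ω => (2 / (N * (N - 1) : ℝ)) *
        ∑ j ∈ Finset.range N, ∑ k ∈ Finset.range j, g (Xs j ω) * Xs k ω)
    (K : ℝ)
    (hK : K = (2 / (N * (N - 1) : ℝ)) *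
        ∑ i ∈ Finset.range N, ∑ j ∈ Finset.range i,
          ∫ ω, (Xs j ω - μ) / σ ∂P)
    (hcond : σ / μ * K ≥ M / m - 1) :
    ∫ ω, ξbar ω ∂P ≤ ∫ ω, ξdag ω ∂P := by
  have hXint : ∀ i, Integrable (X i) P := fun i =>
    .of_integral_ne_zero (by rw [hmean]; exact hμ.ne')
  have hXsint : ∀ k < N, Integrable (Xs k) P := fun k hk =>
    integrable_of_eq_comp_perm hXint (hXsmeas k).aestronglyMeasurable hperm hk
  have hgm : ∀ x, m ≤ g x := fun x => (hbound x).1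
  have hgM : ∀ x, g x ≤ M := fun x => (hbound x).2
  set S := 2 / (N * (N - 1) : ℝ) *
    ∑ j ∈ range N, ∑ k ∈ range j, ∫ ω, max (X j ω) (X k ω) ∂P
  have hbar : ∫ ω, ξbar ω ∂P ≤ M * μ :=
    hξbar ▸ integral_two_div_mul_sum_comp_mul_le hN hmeas hindep hXint hμ.le hmean hg hgm hgM
  have hdag : m * S ≤ ∫ ω, ξdag ω ∂P :=
    hξdag ▸ mul_two_div_mul_sum_integral_max_le hperm hsorted hmeas hindep hident hXint
      (fun i => (hmean i).symm ▸ hμ.le) hg hgm hgM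
  have hKS : K = (S - μ) / σ := by
    rw [hK, two_div_mul_sum_integral_sub_div hN hXsint,
      sum_integral_sorted_eq_sum_integral_max hperm hsorted hXsint hXint]
  have hMμ := mul_le_mul_of_standardized_gap_ge hμ hm
    (le_two_div_mul_sum_integral_max hN hXint hmean) (hKS ▸ hcond)
  linarith

/-- if (σ/μ)·K_N ≥ M/m − 1 then sorting the data in decreasing
order increases the expected second-order SGD correction term: E[ξ†] ≥ E[ξ̄]. -/
theorem stmt11 {Ω : Type*} [MeasurableSpace Ω] (P : Measure Ω)
    [IsProbabilityMeasure P]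
    (N : ℕ) (hN : 2 ≤ N)
    (X : ℕ → Ω → ℝ) (hmeas : ∀ i, Measurable (X i))
    (hindep : iIndepFun X P)
    (hident : ∀ i j, IdentDistrib (X i) (X j) P P)
    (μ σ : ℝ) (hμ : 0 < μ) (hσ : 0 ≤ σ)
    (hmean : ∀ i, ∫ ω, X i ω ∂P = μ)
    (hvar : ∀ i, variance (X i) P = σ ^ 2)
    (Xs : ℕ → Ω → ℝ) (hXsmeas : ∀ i, Measurable (Xs i))
    (hperm : ∀ ω, ∃ e : Equiv.Perm (Fin N), ∀ i : Fin N, Xs i ω = X (e i) ω)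
    (hsorted : ∀ ω, ∀ j k, j ≤ k → k < N → Xs k ω ≤ Xs j ω)
    (g : ℝ → ℝ) (hg : Measurable g)
    (m M : ℝ) (hm : 0 < m) (hmM : m ≤ M)
    (hbound : ∀ x, m ≤ g x ∧ g x ≤ M)
    (ξbar ξdag : Ω → ℝ)
    (hξbar : ξbar = fun ω => (2 / (N * (N - 1) : ℝ)) *
        ∑ j ∈ Finset.range N, ∑ k ∈ Finset.range j, g (X j ω) * X k ω)
    (hξdag : ξdag = fun ω => (2 / (N * (N - 1) : ℝ)) *
        ∑ j ∈ Finset.range N, ∑ k ∈ Finset.range j, g (Xs j ω) * Xs k ω)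
    (K : ℝ)
    (hK : K = (2 / (N * (N - 1) : ℝ)) *
        ∑ i ∈ Finset.range N, ∑ j ∈ Finset.range i,
          ∫ ω, (Xs j ω - μ) / σ ∂P)
    (hKpos : 0 ≤ K)
    (hcond : σ / μ * K ≥ M / m - 1) :
    ∫ ω, ξbar ω ∂P ≤ ∫ ω, ξdag ω ∂P :=
  stmt11_general P N hN X hmeas hindep hident μ σ hμ hmean Xs hXsmeas hperm hsorted g hg m M hm
    hbound ξbar ξdag hξbar hξdag K hK hcond
end
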